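/- Every geodesic segment in the log-euclidean plane can be extended: for all distinct A, B ∈ ℂ there exists C ∈ ℂ with C ≠ B such that dLE(A, B) + dLE(B, C) = dLE(A, C). -/

import Mathlib

open Complex Set

/-- A path `γ : [0,1] → ℂ` is piecewise C¹: continuous on `[0,1]` and C¹ on the
pieces of a finite partition `0 = s 0 < s 1 < ⋯ < s n = 1`. -/
def PiecewiseC1 (γ : ℝ → ℂ) : Prop :=
  ContinuousOn γ (Set.Icc 0 1) ∧
    ∃ (n : ℕ) (s : Fin (n + 1) → ℝ), StrictMono s ∧ s 0 = 0 ∧ s (Fin.last n) = 1 ∧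
      ∀ i : Fin n, ContDiffOn ℝ 1 γ (Set.Icc (s i.castSucc) (s i.succ))

/-- The log-euclidean length of a path: the euclidean length of `t ↦ γ(t)²`. -/
noncomputable def LELength (γ : ℝ → ℂ) : ℝ :=
  ∫ t in (0:ℝ)..1, 2 * ‖γ t‖ * ‖deriv γ t‖

/-- The log-euclidean distance: infimum of log-euclidean lengths of piecewise C¹ paths. -/
noncomputable def dLE (A B : ℂ) : ℝ :=
  sInf {L : ℝ | ∃ γ : ℝ → ℂ, PiecewiseC1 γ ∧ γ 0 = A ∧ γ 1 = B ∧ LELength γ = L}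

/-- A geodesic from `A` to `B` in the log-euclidean plane. -/
def IsLEGeodesic (A B : ℂ) (γ : ℝ → ℂ) : Prop :=
  γ 0 = A ∧ γ (dLE A B) = B ∧
    ∀ s ∈ Set.Icc (0:ℝ) (dLE A B), ∀ t ∈ Set.Icc (0:ℝ) (dLE A B),
      dLE (γ s) (γ t) = |s - t|

open MeasureTheory intervalIntegral

noncomputable def LEIg (γ : ℝ → ℂ) : ℝ → ℝ :=
  fun t => 2 * ‖γ t‖ * ‖deriv γ t‖

-- find the piece containing [a,b] when no partition point lies strictly inside
lemma exists_piece {n : ℕ} {s : Fin (n + 1) → ℝ} (hs : StrictMono s)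
    (h0 : s 0 = 0) (h1 : s (Fin.last n) = 1) {a b : ℝ}
    (ha : 0 ≤ a) (hab : a ≤ b) (hb : b ≤ 1)
    (hdisj : ∀ i : Fin (n + 1), s i ∉ Ioo a b) :
    ∃ i : Fin n, s i.castSucc ≤ a ∧ b ≤ s i.succ := by
  have hn : n ≠ 0 := by
    rintro rfl
    rw [show (Fin.last 0) = 0 from rfl, h0] at h1
    norm_num at h1
  have hne : (Finset.univ.filter (fun i : Fin (n+1) => s i ≤ a)).Nonempty := by
    refine ⟨0, ?_⟩
    simp [h0, ha]
  set T := Finset.univ.filter (fun i : Fin (n+1) => s i ≤ a) with hT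
  set m := T.max' hne with hm
  have hmem : s m ≤ a := by
    have := T.max'_mem hne
    simp [hT] at this; exact this
  rcases eq_or_lt_of_le (Fin.le_last m) with hlast | hlt
  · -- m = last : a = 1, b = 1, use the last piece
    have ha1 : a = 1 := le_antisymm (le_trans hab hb) (by rw [← h1, ← hlast]; exact hmem)
    have hb1 : b = 1 := le_antisymm hb (ha1 ▸ hab)
    refine ⟨⟨n - 1, by omega⟩, ?_, ?_⟩
    · exact le_of_le_of_eq ((hs.le_iff_le).2 (by simp [Fin.le_def])) (h1.trans ha1.symm)
    · have : (⟨n - 1, by omega⟩ : Fin n).succ = Fin.last n := by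
        ext; simp [Fin.last]; omega
      rw [hb1, ← h1, this]
  · -- m < last
    obtain ⟨j, hj⟩ : ∃ j : Fin n, j.castSucc = m := ⟨⟨m.1, by
        simpa [Fin.lt_def, Fin.last] using hlt⟩, by ext; rfl⟩
    refine ⟨j, by rw [hj]; exact hmem, ?_⟩
    by_contra hcon
    push_neg at hcon
    have hgt : a < s j.succ := by
      by_contra h
      push_neg at h
      have hmemT : j.succ ∈ T := by simp [hT, h]
      have hle := T.le_max' _ hmemT
      rw [← hm, ← hj] at hle
      exact absurd hle (Fin.castSucc_lt_succ (i := j)).not_ge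
    exact hdisj j.succ ⟨hgt, hcon⟩


variable {γ : ℝ → ℂ} {l r : ℝ}

lemma hasDerivAt_of_mem_Ioo (h : ContDiffOn ℝ 1 γ (Icc l r)) {x : ℝ} (hx : x ∈ Ioo l r) :
    HasDerivAt γ (deriv γ x) x := by
  have hnb : Icc l r ∈ nhds x := Icc_mem_nhds hx.1 hx.2
  exact (((h.differentiableOn one_ne_zero) x (Ioo_subset_Icc_self hx)).differentiableAt hnb).hasDerivAt

lemma derivWithin_piece_eq (hx : x ∈ Ioo l r) :
    derivWithin γ (Icc l r) x = deriv γ x :=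
  derivWithin_of_mem_nhds (Icc_mem_nhds hx.1 hx.2)

lemma contOn_nice (hlr : l < r) (h : ContDiffOn ℝ 1 γ (Icc l r)) :
    ContinuousOn (fun t => 2 * ‖γ t‖ *
      ‖derivWithin γ (Icc l r) t‖) (Icc l r) := by
  have h1 := h.continuousOn
  have h2 := h.continuousOn_derivWithin (uniqueDiffOn_Icc hlr) le_rfl
  exact (continuousOn_const.mul (h1.norm)).mul
    (h2.norm)

lemma ae_Ioo_of_Icc (hlr : l ≤ r) : ∀ᵐ x ∂(volume.restrict (Icc l r)), x ∈ Ioo l r := by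
  have h0 : (volume : Measure ℝ) ({l, r} : Set ℝ) = 0 :=
    (Set.Countable.measure_zero (Set.Countable.insert _ (Set.countable_singleton _)) _)
  have h1 : ∀ᵐ x : ℝ, x ∉ ({l, r} : Set ℝ) :=
    (MeasureTheory.measure_eq_zero_iff_ae_notMem).1 h0
  filter_upwards [ae_restrict_mem measurableSet_Icc, ae_restrict_of_ae h1] with x hx hx2
  simp only [Set.mem_insert_iff, Set.mem_singleton_iff, not_or] at hx2
  exact ⟨lt_of_le_of_ne hx.1 (Ne.symm hx2.1), lt_of_le_of_ne hx.2 hx2.2⟩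

lemma integrableOn_piece (hlr : l < r) (h : ContDiffOn ℝ 1 γ (Icc l r)) :
    IntegrableOn (LEIg γ) (Icc l r) volume := by
  refine ((contOn_nice hlr h).integrableOn_Icc).congr_fun_ae ?_
  filter_upwards [ae_Ioo_of_Icc hlr.le] with x hx
  simp only [LEIg, derivWithin_piece_eq hx]

lemma integrableOn_LEIg (hγ : PiecewiseC1 γ) : IntegrableOn (LEIg γ) (Icc 0 1) volume := by
  obtain ⟨hcont, n, s, hs, h0, h1, hpieces⟩ := hγ
  have hsub : Icc (0:ℝ) 1 ⊆ ⋃ i ∈ (Finset.univ : Finset (Fin n)),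
      Icc (s i.castSucc) (s i.succ) := by
    intro x hx
    obtain ⟨i, hi1, hi2⟩ := exists_piece hs h0 h1 hx.1 le_rfl hx.2
      (fun i => by simp)
    exact Set.mem_biUnion (Finset.mem_univ i) ⟨hi1, hi2⟩
  exact (MeasureTheory.integrableOn_finset_iUnion.2
    (fun i _ => integrableOn_piece (hs (Fin.castSucc_lt_succ (i := i))) (hpieces i))).mono_set hsub

lemma intervalIntegrable_LEIg (hγ : PiecewiseC1 γ) {a b : ℝ}
    (ha : 0 ≤ a) (hab : a ≤ b) (hb : b ≤ 1) :
    IntervalIntegrable (LEIg γ) volume a b :=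
  (intervalIntegrable_iff_integrableOn_Ioc_of_le hab).2
    ((integrableOn_LEIg hγ).mono_set (fun x hx => ⟨le_trans ha hx.1.le, le_trans hx.2 hb⟩))

section KeyBound

variable {E : Type*} [NormedAddCommGroup E] [NormedSpace ℝ E] [CompleteSpace E]
variable {F : ℂ → E} {F' : ℂ → ℂ →L[ℝ] E}

lemma key_piece (hd : ∀ w, HasFDerivAt F (F' w) w) (hc : Continuous F')
    (hbd : ∀ w v, ‖F' w v‖ ≤ 2 * ‖w‖ * ‖v‖)
    (hlr : l < r) (hγ : ContDiffOn ℝ 1 γ (Icc l r)) {a b : ℝ}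
    (hla : l ≤ a) (hab : a ≤ b) (hbr : b ≤ r) :
    ‖F (γ b) - F (γ a)‖ ≤ ∫ t in a..b, LEIg γ t := by
  set h : ℝ → E := fun t => (F' (γ t)) (derivWithin γ (Icc l r) t) with hh
  have hIoo : Ioo a b ⊆ Ioo l r := Ioo_subset_Ioo hla hbr
  have hIcc : Icc a b ⊆ Icc l r := Icc_subset_Icc hla hbr
  have hFcont : Continuous F := by
    rw [continuous_iff_continuousAt]; exact fun x => (hd x).continuousAt
  have hds : ∀ x ∈ Ioo a b, HasDerivWithinAt (fun t => F (γ t)) (h x) (Ioi x) x := by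
    intro x hx
    have h1 := hasDerivAt_of_mem_Ioo hγ (hIoo hx)
    have h2 := (hd (γ x)).comp_hasDerivAt x h1
    rw [hh]
    simp only [derivWithin_piece_eq (hIoo hx)]
    exact h2.hasDerivWithinAt
  have hdwc : ContinuousOn (fun t => derivWithin γ (Icc l r) t) (Icc a b) :=
    (hγ.continuousOn_derivWithin (uniqueDiffOn_Icc hlr) le_rfl).mono hIcc
  have hhc : ContinuousOn h (Icc a b) :=
    ContinuousOn.clm_apply (hc.comp_continuousOn (hγ.continuousOn.mono hIcc)) hdwc
  have hint : IntervalIntegrable h volume a b := hhc.intervalIntegrable_of_Icc hab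
  have hFTC : ∫ t in a..b, h t = F (γ b) - F (γ a) :=
    integral_eq_sub_of_hasDeriv_right_of_le hab
      (hFcont.comp_continuousOn (hγ.continuousOn.mono hIcc)) hds hint
  have hLE : IntervalIntegrable (LEIg γ) volume a b :=
    (intervalIntegrable_iff_integrableOn_Ioc_of_le hab).2
      ((integrableOn_piece hlr hγ).mono_set
        (fun x hx => hIcc ⟨hx.1.le, hx.2⟩))
  calc ‖F (γ b) - F (γ a)‖ = ‖∫ t in a..b, h t‖ := by rw [hFTC]
    _ ≤ ∫ t in a..b, ‖h t‖ := intervalIntegral.norm_integral_le_integral_norm hab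
    _ ≤ ∫ t in a..b, LEIg γ t := by
        refine intervalIntegral.integral_mono_ae_restrict hab (hhc.norm.intervalIntegrable_of_Icc hab) hLE ?_
        filter_upwards [ae_Ioo_of_Icc hab] with x hx
        have : derivWithin γ (Icc l r) x = deriv γ x := derivWithin_piece_eq (hIoo hx)
        simp only [hh, this, LEIg]
        calc ‖(F' (γ x)) (deriv γ x)‖ ≤ 2 * ‖γ x‖ * ‖deriv γ x‖ := hbd _ _
          _ = 2 * ‖γ x‖ * ‖deriv γ x‖ := rfl

lemma key_bound (hd : ∀ w, HasFDerivAt F (F' w) w) (hc : Continuous F')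
    (hbd : ∀ w v, ‖F' w v‖ ≤ 2 * ‖w‖ * ‖v‖)
    (hγ : PiecewiseC1 γ) {a b : ℝ} (ha : 0 ≤ a) (hab : a ≤ b) (hb : b ≤ 1) :
    ‖F (γ b) - F (γ a)‖ ≤ ∫ t in a..b, LEIg γ t := by
  obtain ⟨hcont, n, s, hs, h0, h1, hp⟩ := id hγ
  have base : ∀ a b : ℝ, 0 ≤ a → a ≤ b → b ≤ 1 →
      (Finset.univ.filter (fun i : Fin (n+1) => s i ∈ Ioo a b)).card = 0 →
      ‖F (γ b) - F (γ a)‖ ≤ ∫ t in a..b, LEIg γ t := by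
    intro a b ha hab hb hcard
    have hdisj : ∀ i : Fin (n+1), s i ∉ Ioo a b := by
      intro i hi
      have hmm : i ∈ Finset.univ.filter (fun i : Fin (n+1) => s i ∈ Ioo a b) :=
        Finset.mem_filter.2 ⟨Finset.mem_univ _, hi⟩
      rw [Finset.card_eq_zero] at hcard
      rw [hcard] at hmm
      exact absurd hmm (Finset.notMem_empty _)
    obtain ⟨i, hi1, hi2⟩ := exists_piece hs h0 h1 ha hab hb hdisj
    exact key_piece hd hc hbd (hs (Fin.castSucc_lt_succ (i := i))) (hp i) hi1 hab hi2
  suffices H : ∀ k, ∀ a b : ℝ, 0 ≤ a → a ≤ b → b ≤ 1 →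
      (Finset.univ.filter (fun i : Fin (n+1) => s i ∈ Ioo a b)).card ≤ k →
      ‖F (γ b) - F (γ a)‖ ≤ ∫ t in a..b, LEIg γ t by
    exact H (n+1) a b ha hab hb (le_trans (Finset.card_filter_le _ _) (by simp))
  intro k
  induction k with
  | zero => intro a b ha hab hb hcard; exact base a b ha hab hb (Nat.le_zero.1 hcard)
  | succ k IH =>
    intro a b ha hab hb hcard
    by_cases h00 : (Finset.univ.filter (fun i : Fin (n+1) => s i ∈ Ioo a b)).card = 0
    · exact base a b ha hab hb h00
    · obtain ⟨i, hi⟩ := Finset.card_pos.1 (Nat.pos_of_ne_zero h00)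
      simp only [Finset.mem_filter, Finset.mem_univ, true_and] at hi
      set c := s i with hc
      have hac : a ≤ c := hi.1.le
      have hcb : c ≤ b := hi.2.le
      have hcard1 : (Finset.univ.filter (fun j : Fin (n+1) => s j ∈ Ioo a c)).card ≤ k := by
        have hsub : Finset.univ.filter (fun j : Fin (n+1) => s j ∈ Ioo a c) ⊆
            (Finset.univ.filter (fun j : Fin (n+1) => s j ∈ Ioo a b)).erase i := by
          intro j hj
          simp only [Finset.mem_filter, Finset.mem_univ, true_and, Set.mem_Ioo] at hj
          refine Finset.mem_erase.2 ⟨?_, by simp [Set.mem_Ioo]; exact ⟨hj.1, lt_of_lt_of_le hj.2 hcb⟩⟩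
          intro hji; rw [hji] at hj; exact absurd hj.2 (lt_irrefl _)
        calc _ ≤ _ := Finset.card_le_card hsub
          _ ≤ _ := by
              rw [Finset.card_erase_of_mem (by simpa using hi)]
              omega
      have hcard2 : (Finset.univ.filter (fun j : Fin (n+1) => s j ∈ Ioo c b)).card ≤ k := by
        have hsub : Finset.univ.filter (fun j : Fin (n+1) => s j ∈ Ioo c b) ⊆
            (Finset.univ.filter (fun j : Fin (n+1) => s j ∈ Ioo a b)).erase i := by
          intro j hj
          simp only [Finset.mem_filter, Finset.mem_univ, true_and, Set.mem_Ioo] at hj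
          refine Finset.mem_erase.2 ⟨?_, by simp [Set.mem_Ioo]; exact ⟨lt_of_le_of_lt hac hj.1, hj.2⟩⟩
          intro hji; rw [hji] at hj; exact absurd hj.1 (lt_irrefl _)
        calc _ ≤ _ := Finset.card_le_card hsub
          _ ≤ _ := by
              rw [Finset.card_erase_of_mem (by simpa using hi)]
              omega
      have b1 := IH a c ha hac (le_trans hcb hb) hcard1
      have b2 := IH c b (le_trans ha hac) hcb hb hcard2
      have hsplit : ∫ t in a..b, LEIg γ t = (∫ t in a..c, LEIg γ t) + ∫ t in c..b, LEIg γ t :=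
        (integral_add_adjacent_intervals
          (intervalIntegrable_LEIg hγ ha hac (le_trans hcb hb))
          (intervalIntegrable_LEIg hγ (le_trans ha hac) hcb hb)).symm
      calc ‖F (γ b) - F (γ a)‖ = ‖(F (γ b) - F (γ c)) + (F (γ c) - F (γ a))‖ := by
            rw [sub_add_sub_cancel]
        _ ≤ ‖F (γ b) - F (γ c)‖ + ‖F (γ c) - F (γ a)‖ := norm_add_le _ _
        _ ≤ (∫ t in c..b, LEIg γ t) + ∫ t in a..c, LEIg γ t := add_le_add b2 b1
        _ = ∫ t in a..b, LEIg γ t := by rw [hsplit]; ring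

end KeyBound

section Instantiations

noncomputable def Fsq' : ℂ → ℂ →L[ℝ] ℂ :=
  fun w => ((1 : ℂ →L[ℂ] ℂ).smulRight (2 * w)).restrictScalars ℝ

lemma Fsq'_apply (w v : ℂ) : Fsq' w v = v * (2 * w) := rfl

lemma hasFDerivAt_sq (w : ℂ) : HasFDerivAt (fun z : ℂ => z ^ 2) (Fsq' w) w := by
  have h := (hasDerivAt_pow 2 w).hasFDerivAt
  have h2 := h.restrictScalars ℝ
  have he : Fsq' w = ((1 : ℂ →L[ℂ] ℂ).smulRight (((2:ℕ):ℂ) * w ^ (2 - 1))).restrictScalars ℝ := by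
    refine ContinuousLinearMap.ext fun v => ?_
    show v * (2 * w) = v • (((2:ℕ):ℂ) * w ^ (2 - 1))
    rw [smul_eq_mul]
    push_cast
    ring
  rw [he]
  exact h2

lemma continuous_Fsq' : Continuous Fsq' := by
  have : LipschitzWith 2 Fsq' := by
    apply LipschitzWith.of_dist_le_mul
    intro x y
    rw [dist_eq_norm, dist_eq_norm]
    have : Fsq' x - Fsq' y = ((1 : ℂ →L[ℂ] ℂ).smulRight (2 * x - 2 * y)).restrictScalars ℝ := by
      ext v
      simp [Fsq']
      ring
    rw [this, ContinuousLinearMap.norm_restrictScalars,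
      ContinuousLinearMap.norm_smulRight_apply, norm_one]
    rw [show 2 * x - 2 * y = 2 * (x - y) by ring]
    simp [norm_mul]
  exact this.continuous

lemma bd_Fsq' (w v : ℂ) : ‖Fsq' w v‖ ≤ 2 * ‖w‖ * ‖v‖ := by
  rw [Fsq'_apply]
  simp only [norm_mul, Complex.norm_two]
  exact le_of_eq (by ring)

noncomputable def Fns' : ℂ → ℂ →L[ℝ] ℝ :=
  fun w => (2 * w.re) • Complex.reCLM + (2 * w.im) • Complex.imCLM

lemma Fns'_apply (w v : ℂ) : Fns' w v = 2 * w.re * v.re + 2 * w.im * v.im := by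
  simp [Fns']

lemma hasFDerivAt_ns (w : ℂ) : HasFDerivAt (fun z : ℂ => Complex.normSq z) (Fns' w) w := by
  have : (fun z : ℂ => Complex.normSq z) = fun z : ℂ => z.re * z.re + z.im * z.im := by
    funext z; exact Complex.normSq_apply z
  rw [this]
  have hre : HasFDerivAt (fun z : ℂ => z.re) (Complex.reCLM : ℂ →L[ℝ] ℝ) w :=
    Complex.reCLM.hasFDerivAt
  have him : HasFDerivAt (fun z : ℂ => z.im) (Complex.imCLM : ℂ →L[ℝ] ℝ) w :=
    Complex.imCLM.hasFDerivAt
  have h := (hre.mul hre).add (him.mul him)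
  refine h.congr_fderiv ?_
  ext v
  simp [Fns']
  ring

lemma continuous_Fns' : Continuous Fns' := by
  apply Continuous.add
  · exact (continuous_const.mul Complex.continuous_re).smul continuous_const
  · exact (continuous_const.mul Complex.continuous_im).smul continuous_const

lemma bd_Fns' (w v : ℂ) : ‖Fns' w v‖ ≤ 2 * ‖w‖ * ‖v‖ := by
  rw [Fns'_apply]
  have hw : ‖w‖ ^ 2 = w.re ^ 2 + w.im ^ 2 := by
    rw [Complex.sq_norm, Complex.normSq_apply]; ring
  have hv : ‖v‖ ^ 2 = v.re ^ 2 + v.im ^ 2 := by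
    rw [Complex.sq_norm, Complex.normSq_apply]; ring
  have key : (2 * w.re * v.re + 2 * w.im * v.im) ^ 2 ≤ (2 * ‖w‖ * ‖v‖) ^ 2 := by
    nlinarith [sq_nonneg (w.re * v.im - w.im * v.re), sq_nonneg (w.re * v.im + w.im * v.re)]
  have h2 := Real.sqrt_le_sqrt key
  rw [Real.sqrt_sq_eq_abs, Real.sqrt_sq (by positivity)] at h2
  rw [Real.norm_eq_abs]
  exact h2

lemma E1_bound (hγ : PiecewiseC1 γ) {a b : ℝ} (ha : 0 ≤ a) (hab : a ≤ b) (hb : b ≤ 1) :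
    ‖γ b ^ 2 - γ a ^ 2‖ ≤ ∫ t in a..b, LEIg γ t := by
  have := key_bound hasFDerivAt_sq continuous_Fsq' bd_Fsq' hγ ha hab hb
  exact this

lemma E2_bound (hγ : PiecewiseC1 γ) {a b : ℝ} (ha : 0 ≤ a) (hab : a ≤ b) (hb : b ≤ 1) :
    |‖γ b‖ ^ 2 - ‖γ a‖ ^ 2| ≤ ∫ t in a..b, LEIg γ t := by
  have := key_bound hasFDerivAt_ns continuous_Fns' bd_Fns' hγ ha hab hb
  rwa [Real.norm_eq_abs, ← Complex.sq_norm, ← Complex.sq_norm] at this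

end Instantiations

section PathZ

lemma hasDerivAt_affineC (a b : ℝ) (W : ℂ) (t : ℝ) :
    HasDerivAt (fun t : ℝ => ((a * t + b : ℝ) : ℂ) * W) ((a : ℂ) * W) t := by
  have h1 : HasDerivAt (fun t : ℝ => a * t + b) a t := by
    simpa using ((hasDerivAt_id t).const_mul a).add_const b
  exact (h1.ofReal_comp).mul_const W

lemma contDiff_affineC (a b : ℝ) (W : ℂ) :
    ContDiff ℝ 1 (fun t : ℝ => ((a * t + b : ℝ) : ℂ) * W) := by
  have h1 : ContDiff ℝ 1 (fun t : ℝ => a * t + b) :=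
    (contDiff_const.mul contDiff_id).add contDiff_const
  exact (Complex.ofRealCLM.contDiff.comp h1).mul contDiff_const

noncomputable def pathZ (X Y : ℂ) : ℝ → ℂ :=
  fun t => if t ≤ 1/2 then (((-2) * t + 1 : ℝ) : ℂ) * X else ((2 * t + (-1) : ℝ) : ℂ) * Y

lemma pathZ_zero (X Y : ℂ) : pathZ X Y 0 = X := by norm_num [pathZ]

lemma pathZ_one (X Y : ℂ) : pathZ X Y 1 = Y := by norm_num [pathZ]

lemma pathZ_pcw (X Y : ℂ) : PiecewiseC1 (pathZ X Y) := by
  constructor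
  · apply Continuous.continuousOn
    apply Continuous.if_le
    · exact (contDiff_affineC (-2) 1 X).continuous
    · exact (contDiff_affineC 2 (-1) Y).continuous
    · exact continuous_id
    · exact continuous_const
    · intro x hx; rw [hx]; norm_num
  · refine ⟨2, ![0, 1/2, 1], ?_, rfl, rfl, ?_⟩
    · intro i j hij
      fin_cases i <;> fin_cases j <;> simp_all <;> norm_num
    · intro i
      fin_cases i
      · refine ((contDiff_affineC (-2) 1 X).contDiffOn).congr ?_
        intro x hx
        simp only [Fin.castSucc, Fin.succ] at hx
        have hx2 : x ≤ 1/2 := by simpa using hx.2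
        simp only [pathZ]
        rw [if_pos hx2]
      · refine ((contDiff_affineC 2 (-1) Y).contDiffOn).congr ?_
        intro x hx
        have hx1 : (1:ℝ)/2 ≤ x := by simpa using hx.1
        by_cases h : x ≤ 1/2
        · have hxe : x = 1/2 := le_antisymm h hx1
          subst hxe
          simp only [pathZ]
          norm_num
        · simp only [pathZ]
          rw [if_neg h]

lemma pathZ_deriv_left (X Y : ℂ) {t : ℝ} (ht : t < 1/2) :
    deriv (pathZ X Y) t = ((-2 : ℝ) : ℂ) * X := by
  have he : pathZ X Y =ᶠ[nhds t] (fun t : ℝ => (((-2) * t + 1 : ℝ) : ℂ) * X) := by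
    filter_upwards [Iio_mem_nhds ht] with y hy
    simp only [pathZ]
    rw [if_pos (le_of_lt (Set.mem_Iio.1 hy))]
  rw [he.deriv_eq, (hasDerivAt_affineC (-2) 1 X t).deriv]

lemma pathZ_deriv_right (X Y : ℂ) {t : ℝ} (ht : 1/2 < t) :
    deriv (pathZ X Y) t = ((2 : ℝ) : ℂ) * Y := by
  have he : pathZ X Y =ᶠ[nhds t] (fun t : ℝ => ((2 * t + (-1) : ℝ) : ℂ) * Y) := by
    filter_upwards [Ioi_mem_nhds ht] with y hy
    simp only [pathZ]
    rw [if_neg (not_le.2 (Set.mem_Ioi.1 hy))]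
  rw [he.deriv_eq, (hasDerivAt_affineC 2 (-1) Y t).deriv]

lemma integral_affine (a b lo hi : ℝ) :
    ∫ t in lo..hi, (a * t + b) = a * ((hi^2 - lo^2)/2) + (hi - lo) * b := by
  have h1 : IntervalIntegrable (fun t : ℝ => a * t) MeasureTheory.volume lo hi :=
    (Continuous.intervalIntegrable (by continuity) _ _)
  rw [intervalIntegral.integral_add h1 intervalIntegrable_const,
    intervalIntegral.integral_const_mul, integral_id, intervalIntegral.integral_const]
  simp only [smul_eq_mul]
  try ring

lemma pathZ_length (X Y : ℂ) :
    LELength (pathZ X Y) = ‖X‖ ^ 2 + ‖Y‖ ^ 2 := by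
  have hpcw := pathZ_pcw X Y
  have hLE : LELength (pathZ X Y) = ∫ t in (0:ℝ)..1, LEIg (pathZ X Y) t := rfl
  have hsplit : ∫ t in (0:ℝ)..1, LEIg (pathZ X Y) t =
      (∫ t in (0:ℝ)..(1/2), LEIg (pathZ X Y) t) + ∫ t in (1/2:ℝ)..1, LEIg (pathZ X Y) t :=
    (integral_add_adjacent_intervals
      (intervalIntegrable_LEIg hpcw le_rfl (by norm_num) (by norm_num))
      (intervalIntegrable_LEIg hpcw (by norm_num) (by norm_num) le_rfl)).symm
  have hhalf : ∀ᵐ x : ℝ, x ∉ ({1/2} : Set ℝ) :=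
    (MeasureTheory.measure_eq_zero_iff_ae_notMem).1 Real.volume_singleton
  have h1 : ∫ t in (0:ℝ)..(1/2), LEIg (pathZ X Y) t
      = ∫ t in (0:ℝ)..(1/2), (4 * ‖X‖ ^ 2) * ((-1)*t + 1/2) * 2 := by
    refine intervalIntegral.integral_congr_ae ?_
    filter_upwards [hhalf] with x hx hmem
    rw [Set.uIoc_of_le (by norm_num : (0:ℝ) ≤ 1/2)] at hmem
    have hlt : x < 1/2 := lt_of_le_of_ne hmem.2 (by simpa using hx)
    have hd := pathZ_deriv_left X Y hlt
    simp only [LEIg, hd, pathZ, if_pos hlt.le]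
    rw [norm_mul, norm_mul, Complex.norm_real, Complex.norm_real, Real.norm_eq_abs, Real.norm_eq_abs]
    rw [_root_.abs_of_nonneg (by linarith : (0:ℝ) ≤ -2*x+1), show |(-2:ℝ)| = 2 by norm_num]
    ring
  have h2 : ∫ t in (1/2:ℝ)..1, LEIg (pathZ X Y) t
      = ∫ t in (1/2:ℝ)..1, (4 * ‖Y‖ ^ 2) * (t + (-1)/2) * 2 := by
    refine intervalIntegral.integral_congr_ae ?_
    filter_upwards [hhalf] with x hx hmem
    rw [Set.uIoc_of_le (by norm_num : (1:ℝ)/2 ≤ 1)] at hmem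
    have hlt : 1/2 < x := hmem.1
    have hd := pathZ_deriv_right X Y hlt
    simp only [LEIg, hd, pathZ, if_neg (not_le.2 hlt)]
    rw [norm_mul, norm_mul, Complex.norm_real, Complex.norm_real, Real.norm_eq_abs, Real.norm_eq_abs]
    rw [_root_.abs_of_nonneg (by linarith : (0:ℝ) ≤ 2*x+(-1)), show |(2:ℝ)| = 2 by norm_num]
    ring
  rw [hLE, hsplit, h1, h2]
  have e1 : ∫ t in (0:ℝ)..(1/2), (4 * ‖X‖ ^ 2) * ((-1)*t + 1/2) * 2 =
      ‖X‖ ^ 2 := by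
    have : (fun t : ℝ => (4 * ‖X‖ ^ 2) * ((-1)*t + 1/2) * 2)
        = fun t : ℝ => (8 * ‖X‖ ^ 2) * ((-1)*t + 1/2) := by funext t; ring
    rw [this, intervalIntegral.integral_const_mul, integral_affine]
    ring
  have e2 : ∫ t in (1/2:ℝ)..1, (4 * ‖Y‖ ^ 2) * (t + (-1)/2) * 2 =
      ‖Y‖ ^ 2 := by
    have : (fun t : ℝ => (4 * ‖Y‖ ^ 2) * (t + (-1)/2) * 2)
        = fun t : ℝ => (8 * ‖Y‖ ^ 2) * (1*t + (-1)/2) := by funext t; ring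
    rw [this, intervalIntegral.integral_const_mul, integral_affine]
    ring
  rw [e1, e2]

end PathZ

section DLE

lemma LEIg_nonneg (γ : ℝ → ℂ) (t : ℝ) : 0 ≤ LEIg γ t := by
  unfold LEIg; positivity

lemma LELength_eq (γ : ℝ → ℂ) : LELength γ = ∫ t in (0:ℝ)..1, LEIg γ t := rfl

lemma LELength_nonneg (γ : ℝ → ℂ) : 0 ≤ LELength γ :=
  intervalIntegral.integral_nonneg (by norm_num) (fun t _ => LEIg_nonneg γ t)

lemma dLE_bddBelow (A B : ℂ) :
    BddBelow {L : ℝ | ∃ γ : ℝ → ℂ, PiecewiseC1 γ ∧ γ 0 = A ∧ γ 1 = B ∧ LELength γ = L} :=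
  ⟨0, by rintro L ⟨γ, _, _, _, rfl⟩; exact LELength_nonneg γ⟩

lemma dLE_nonempty (A B : ℂ) :
    {L : ℝ | ∃ γ : ℝ → ℂ, PiecewiseC1 γ ∧ γ 0 = A ∧ γ 1 = B ∧ LELength γ = L}.Nonempty :=
  ⟨_, pathZ A B, pathZ_pcw A B, pathZ_zero A B, pathZ_one A B, rfl⟩

lemma dLE_le_of_path {A B : ℂ} (γ : ℝ → ℂ) (h1 : PiecewiseC1 γ) (h2 : γ 0 = A)
    (h3 : γ 1 = B) {L : ℝ} (h4 : LELength γ = L) : dLE A B ≤ L :=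
  csInf_le (dLE_bddBelow A B) ⟨γ, h1, h2, h3, h4⟩

lemma le_dLE {A B : ℂ} {c : ℝ}
    (h : ∀ γ : ℝ → ℂ, PiecewiseC1 γ → γ 0 = A → γ 1 = B → c ≤ LELength γ) :
    c ≤ dLE A B :=
  le_csInf (dLE_nonempty A B) (by rintro L ⟨γ, hγ, h0, h1, rfl⟩; exact h γ hγ h0 h1)

lemma dLE_le_pathZ (A B : ℂ) : dLE A B ≤ ‖A‖ ^ 2 + ‖B‖ ^ 2 :=
  dLE_le_of_path _ (pathZ_pcw A B) (pathZ_zero A B) (pathZ_one A B) (pathZ_length A B)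

lemma dLE_ge_sub (A B : ℂ) : ‖B ^ 2 - A ^ 2‖ ≤ dLE A B := by
  apply le_dLE
  intro γ hγ h0 h1
  have := E1_bound hγ (le_refl (0:ℝ)) (by norm_num) (le_refl (1:ℝ))
  rw [h0, h1] at this
  rwa [LELength_eq]

-- the perpendicular identity : if Re (conj A * M) = 0 then |M² - A²| = |A|² + |M|²
lemma perp_identity {A M : ℂ} (h : ((starRingEnd ℂ) A * M).re = 0) :
    ‖M ^ 2 - A ^ 2‖ = ‖A‖ ^ 2 + ‖M‖ ^ 2 := by
  have hre : A.re * M.re + A.im * M.im = 0 := by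
    simpa [Complex.mul_re, Complex.conj_re, Complex.conj_im] using h
  have key : Complex.normSq (M ^ 2 - A ^ 2) = (Complex.normSq A + Complex.normSq M) ^ 2 := by
    rw [show M ^ 2 - A ^ 2 = (M - A) * (M + A) by ring, map_mul]
    simp only [Complex.normSq_apply, Complex.sub_re, Complex.sub_im, Complex.add_re,
      Complex.add_im]
    linear_combination (-4 * (A.re * M.re + A.im * M.im)) * hre
  have h1 : ‖M ^ 2 - A ^ 2‖ = Real.sqrt ((Complex.normSq A + Complex.normSq M) ^ 2) := by
    rw [Complex.norm_def, key]
  rw [h1, Real.sqrt_sq (add_nonneg (Complex.normSq_nonneg _) (Complex.normSq_nonneg _)),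
    ← Complex.sq_norm, ← Complex.sq_norm]

lemma dLE_ge_hard {A B : ℂ} (h : ((starRingEnd ℂ) A * B).re ≤ 0) :
    ‖A‖ ^ 2 + ‖B‖ ^ 2 ≤ dLE A B := by
  apply le_dLE
  intro γ hγ h0 h1
  -- find t0 where Re(conj A * γ t0) = 0
  have hcont : ContinuousOn (fun t => ((starRingEnd ℂ) A * γ t).re) (Icc 0 1) :=
    (Complex.continuous_re.comp_continuousOn (continuousOn_const.mul hγ.1))
  have hg1 : ((starRingEnd ℂ) A * γ 1).re ≤ 0 := by rw [h1]; exact h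
  have hg0 : 0 ≤ ((starRingEnd ℂ) A * γ 0).re := by
    rw [h0]
    simp only [Complex.mul_re, Complex.conj_re, Complex.conj_im]
    nlinarith [sq_nonneg A.re, sq_nonneg A.im]
  obtain ⟨t0, ht0mem, ht0⟩ : ∃ t0 ∈ Icc (0:ℝ) 1, ((starRingEnd ℂ) A * γ t0).re = 0 := by
    have := intermediate_value_Icc' (by norm_num : (0:ℝ) ≤ 1) hcont
    have h00 : (0:ℝ) ∈ Icc (((starRingEnd ℂ) A * γ 1).re) (((starRingEnd ℂ) A * γ 0).re) :=
      ⟨hg1, hg0⟩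
    obtain ⟨t0, ht0mem, ht0⟩ := this h00
    exact ⟨t0, ht0mem, ht0⟩
  set M := γ t0 with hM
  have hperp : ‖M ^ 2 - A ^ 2‖ = ‖A‖ ^ 2 + ‖M‖ ^ 2 :=
    perp_identity ht0
  have hb1 : ‖A‖ ^ 2 + ‖M‖ ^ 2 ≤ ∫ t in (0:ℝ)..t0, LEIg γ t := by
    rw [← hperp, ← h0, hM]
    exact E1_bound hγ le_rfl ht0mem.1 ht0mem.2
  have hb2 : ‖B‖ ^ 2 - ‖M‖ ^ 2 ≤ ∫ t in t0..1, LEIg γ t := by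
    have := E2_bound hγ ht0mem.1 ht0mem.2 le_rfl
    rw [h1] at this
    calc ‖B‖ ^ 2 - ‖M‖ ^ 2 ≤ |‖B‖ ^ 2 - ‖γ t0‖ ^ 2| := by
          rw [hM]; exact le_abs_self _
      _ ≤ _ := this
  have hsplit : LELength γ = (∫ t in (0:ℝ)..t0, LEIg γ t) + ∫ t in t0..1, LEIg γ t := by
    rw [LELength_eq]
    exact (integral_add_adjacent_intervals
      (intervalIntegrable_LEIg hγ le_rfl ht0mem.1 ht0mem.2)
      (intervalIntegrable_LEIg hγ ht0mem.1 ht0mem.2 le_rfl)).symm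
  rw [hsplit]
  linarith

lemma dLE_hard {A B : ℂ} (h : ((starRingEnd ℂ) A * B).re ≤ 0) :
    dLE A B = ‖A‖ ^ 2 + ‖B‖ ^ 2 :=
  le_antisymm (dLE_le_pathZ A B) (dLE_ge_hard h)

end DLE

lemma strictMono01 : StrictMono ![(0:ℝ), 1] := by
  intro i j hij
  fin_cases i <;> fin_cases j <;> simp_all <;> norm_num

lemma pcw_of_cd {g : ℝ → ℂ} (h : ∀ t ∈ Icc (0:ℝ) 1, ContDiffAt ℝ 1 g t) : PiecewiseC1 g := by
  constructor
  · exact fun t ht => ((h t ht).continuousAt).continuousWithinAt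
  · refine ⟨1, ![0, 1], strictMono01, rfl, rfl, ?_⟩
    intro i
    fin_cases i
    intro t ht
    have ht' : t ∈ Icc (0:ℝ) 1 := by simpa using ht
    exact (h t ht').contDiffWithinAt

section Lift

lemma pcw_neg {γ : ℝ → ℂ} (h : PiecewiseC1 γ) : PiecewiseC1 (fun t => -(γ t)) := by
  obtain ⟨hc, n, s, hs, h0, h1, hp⟩ := h
  exact ⟨hc.neg, n, s, hs, h0, h1, fun i => (hp i).neg⟩

lemma LELength_neg (γ : ℝ → ℂ) : LELength (fun t => -(γ t)) = LELength γ := by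
  rw [LELength_eq, LELength_eq]
  apply intervalIntegral.integral_congr
  intro t _
  simp only [LEIg, deriv.neg, norm_neg]
  rw [show (fun t => -γ t) = -γ from rfl, deriv.neg', norm_neg]

lemma re_conj_mul (X Y : ℂ) : ((starRingEnd ℂ) X * Y).re = X.re * Y.re + X.im * Y.im := by
  simp [Complex.mul_re, Complex.conj_re, Complex.conj_im]

lemma lift_path {X Y : ℂ} (h : 0 < ((starRingEnd ℂ) X * Y).re) :
    ∃ γ : ℝ → ℂ, PiecewiseC1 γ ∧ γ 0 = X ∧ γ 1 = Y ∧
      LELength γ = ‖Y ^ 2 - X ^ 2‖ := by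
  have hX : X ≠ 0 := by rintro rfl; simp at h
  have hY : Y ≠ 0 := by rintro rfl; simp at h
  set d : ℂ := X * Y with hdd
  have hd : d ≠ 0 := mul_ne_zero hX hY
  set z : ℝ → ℂ := fun t => X ^ 2 + (t : ℂ) * (Y ^ 2 - X ^ 2) with hzdef
  -- positivity of re(z t / d) on [0,1]
  have hp0 : 0 < (X ^ 2 / d).re := by
    have he : X ^ 2 / d = X / Y := by
      field_simp [hdd]
      ring
    rw [he, Complex.div_re]
    have : X.re * Y.re / Complex.normSq Y + X.im * Y.im / Complex.normSq Y
        = ((starRingEnd ℂ) X * Y).re / Complex.normSq Y := by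
      rw [re_conj_mul]; ring
    rw [this]
    exact div_pos h (Complex.normSq_pos.2 hY)
  have hp1 : 0 < (Y ^ 2 / d).re := by
    have he : Y ^ 2 / d = Y / X := by
      field_simp [hdd]
      ring
    rw [he, Complex.div_re]
    have : Y.re * X.re / Complex.normSq X + Y.im * X.im / Complex.normSq X
        = ((starRingEnd ℂ) X * Y).re / Complex.normSq X := by
      rw [re_conj_mul]; ring
    rw [this]
    exact div_pos h (Complex.normSq_pos.2 hX)
  have hzd : ∀ t : ℝ, z t / d = ((1 - t : ℝ) : ℂ) * (X ^ 2 / d) + ((t : ℝ) : ℂ) * (Y ^ 2 / d) := by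
    intro t
    field_simp [hzdef]
    simp only [hzdef]
    push_cast
    ring
  have hre : ∀ t ∈ Icc (0:ℝ) 1, 0 < (z t / d).re := by
    intro t ht
    rw [hzd t, Complex.add_re, Complex.re_ofReal_mul, Complex.re_ofReal_mul]
    rcases lt_or_eq_of_le ht.2 with h1t | h1t
    · have hA : 0 < (1 - t) * (X ^ 2 / d).re := mul_pos (by linarith) hp0
      have hB : 0 ≤ t * (Y ^ 2 / d).re := mul_nonneg ht.1 hp1.le
      linarith
    · rw [h1t]; simpa using hp1
  have hslit : ∀ t ∈ Icc (0:ℝ) 1, z t / d ∈ Complex.slitPlane := by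
    intro t ht
    exact Complex.mem_slitPlane_iff.2 (Or.inl (hre t ht))
  have hzd_ne : ∀ t ∈ Icc (0:ℝ) 1, z t / d ≠ 0 := by
    intro t ht h0
    have := hre t ht
    rw [h0] at this
    simp at this
  have hz_ne : ∀ t ∈ Icc (0:ℝ) 1, z t ≠ 0 := by
    intro t ht h0
    exact hzd_ne t ht (by rw [h0]; simp)
  set c : ℂ := d ^ ((1:ℂ)/2) with hcdef
  have hc0 : c ≠ 0 := by
    rw [hcdef, Ne, Complex.cpow_eq_zero_iff]
    push_neg
    intro h'
    exact absurd h' hd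
  have hc2 : c ^ 2 = d := by
    rw [hcdef, sq, ← Complex.cpow_add _ _ hd]
    norm_num
  set γ0 : ℝ → ℂ := fun t => c * Complex.exp ((1/2 : ℂ) * Complex.log (z t / d)) with hγ0
  have hsq : ∀ t ∈ Icc (0:ℝ) 1, (γ0 t) ^ 2 = z t := by
    intro t ht
    rw [hγ0]
    simp only
    rw [mul_pow, ← Complex.exp_nat_mul]
    have : (2 : ℕ) * ((1/2 : ℂ) * Complex.log (z t / d)) = Complex.log (z t / d) := by
      push_cast; ring
    rw [this, Complex.exp_log (hzd_ne t ht), hc2]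
    field_simp
  have hderiv : ∀ t ∈ Icc (0:ℝ) 1,
      HasDerivAt γ0 (γ0 t * ((Y ^ 2 - X ^ 2) / (2 * z t))) t := by
    intro t ht
    have h1 : HasDerivAt z (Y ^ 2 - X ^ 2) t := by
      have h2 : HasDerivAt (fun y : ℝ => (y : ℂ)) 1 t := (hasDerivAt_id t).ofReal_comp
      have h3 := (h2.mul_const (Y ^ 2 - X ^ 2)).const_add (X ^ 2)
      simpa [hzdef] using h3
    have h4 := h1.div_const d
    have h5 := (h4.clog_real (hslit t ht)).const_mul (1/2 : ℂ)
    have h6 := h5.cexp.const_mul c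
    refine h6.congr_deriv ?_
    rw [hγ0]
    simp only
    field_simp [hz_ne t ht, hd]
  have hcd : ∀ t ∈ Icc (0:ℝ) 1, ContDiffAt ℝ 1 γ0 t := by
    intro t ht
    have hz_cd : ContDiffAt ℝ 1 (fun t : ℝ => z t / d) t := by
      have : ContDiff ℝ 1 (fun t : ℝ => z t / d) :=
        ((contDiff_const.add ((Complex.ofRealCLM.contDiff).mul contDiff_const)).div_const _)
      exact this.contDiffAt
    have hl : ContDiffAt ℂ 1 Complex.log (z t / d) := Complex.contDiffAt_log (hslit t ht)
    have hlog : ContDiffAt ℝ 1 (fun t : ℝ => Complex.log (z t / d)) t :=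
      by have := (hl.restrict_scalars ℝ).comp t hz_cd; exact this
    have he : ContDiffAt ℂ 1 Complex.exp ((1/2 : ℂ) * Complex.log (z t / d)) :=
      Complex.contDiff_exp.contDiffAt
    have hexp : ContDiffAt ℝ 1 (fun t : ℝ => Complex.exp ((1/2 : ℂ) * Complex.log (z t / d))) t :=
      (he.restrict_scalars ℝ).comp t (contDiffAt_const.mul hlog)
    exact contDiffAt_const.mul hexp
  -- rest of lift_path
  have hpcw : PiecewiseC1 γ0 := pcw_of_cd hcd
  have hlen : LELength γ0 = ‖Y ^ 2 - X ^ 2‖ := by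
    rw [LELength_eq]
    have heq : Set.EqOn (LEIg γ0) (fun _ => ‖Y ^ 2 - X ^ 2‖) (Set.uIcc 0 1) := by
      intro t ht'
      rw [Set.uIcc_of_le (by norm_num : (0:ℝ) ≤ 1)] at ht'
      have hD := (hderiv t ht').deriv
      have hZne : ‖z t‖ ≠ 0 := by
        simpa [norm_eq_zero] using hz_ne t ht'
      have haγ : ‖γ0 t‖ * ‖γ0 t‖ = ‖z t‖ := by
        rw [← norm_mul, ← sq, hsq t ht']
      simp only [LEIg, hD, norm_mul, norm_div, Complex.norm_two]
      field_simp
      linear_combination ‖Y ^ 2 - X ^ 2‖ * haγ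
    rw [intervalIntegral.integral_congr heq, intervalIntegral.integral_const]
    simp
  have hz0 : z 0 = X ^ 2 := by simp [hzdef]
  have hz1 : z 1 = Y ^ 2 := by simp [hzdef]
  have h00 : (γ0 0) ^ 2 = X ^ 2 := by rw [hsq 0 (by norm_num), hz0]
  have h11 : (γ0 1) ^ 2 = Y ^ 2 := by rw [hsq 1 (by norm_num), hz1]
  have hsign : 0 < ((starRingEnd ℂ) (γ0 0) * (γ0 1)).re := by
    set L0 := Complex.log (z 0 / d) with hL0
    set L1 := Complex.log (z 1 / d) with hL1
    have harg0 : |(z 0 / d).arg| < Real.pi / 2 :=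
      Complex.abs_arg_lt_pi_div_two_iff.2 (Or.inl (hre 0 (by norm_num)))
    have harg1 : |(z 1 / d).arg| < Real.pi / 2 :=
      Complex.abs_arg_lt_pi_div_two_iff.2 (Or.inl (hre 1 (by norm_num)))
    have hkey : (starRingEnd ℂ) (γ0 0) * (γ0 1)
        = ((Complex.normSq c : ℝ) : ℂ) *
          Complex.exp ((starRingEnd ℂ) ((1/2 : ℂ) * L0) + (1/2 : ℂ) * L1) := by
      rw [hγ0]
      simp only
      rw [map_mul, ← Complex.exp_conj, Complex.exp_add, ← Complex.mul_conj]
      ring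
    rw [hkey, Complex.re_ofReal_mul]
    apply mul_pos (Complex.normSq_pos.2 hc0)
    rw [Complex.exp_re]
    apply mul_pos (Real.exp_pos _)
    apply Real.cos_pos_of_mem_Ioo
    have him : ((starRingEnd ℂ) ((1/2 : ℂ) * L0) + (1/2 : ℂ) * L1).im
        = ((z 1 / d).arg) / 2 - ((z 0 / d).arg) / 2 := by
      simp [Complex.add_im, Complex.conj_im, Complex.mul_im, hL0, hL1, Complex.log_im]
      norm_num
      ring
    rw [him]
    constructor
    · have := abs_lt.1 harg0; have := abs_lt.1 harg1; linarith
    · have := abs_lt.1 harg0; have := abs_lt.1 harg1; linarith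
  have hx : γ0 0 = X ∨ γ0 0 = -X := by
    have hfac : (γ0 0 - X) * (γ0 0 + X) = 0 := by linear_combination h00
    rcases mul_eq_zero.1 hfac with h' | h'
    · exact Or.inl (sub_eq_zero.1 h')
    · exact Or.inr (eq_neg_of_add_eq_zero_left h')
  have hy : γ0 1 = Y ∨ γ0 1 = -Y := by
    have hfac : (γ0 1 - Y) * (γ0 1 + Y) = 0 := by linear_combination h11
    rcases mul_eq_zero.1 hfac with h' | h'
    · exact Or.inl (sub_eq_zero.1 h')
    · exact Or.inr (eq_neg_of_add_eq_zero_left h')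
  rcases hx with hx | hx <;> rcases hy with hy | hy
  · exact ⟨γ0, hpcw, hx, hy, hlen⟩
  · exfalso
    rw [hx, hy] at hsign
    simp only [mul_neg, Complex.neg_re] at hsign
    linarith
  · exfalso
    rw [hx, hy] at hsign
    simp only [map_neg, neg_mul, Complex.neg_re] at hsign
    linarith
  · refine ⟨fun t => -(γ0 t), pcw_neg hpcw, ?_, ?_, ?_⟩
    · show -(γ0 0) = X
      rw [hx]; ring
    · show -(γ0 1) = Y
      rw [hy]; ring
    · rw [LELength_neg, hlen]

end Lift

section Final

lemma dLE_le_easy {A B : ℂ} (h : 0 ≤ ((starRingEnd ℂ) A * B).re) :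
    dLE A B ≤ ‖B ^ 2 - A ^ 2‖ := by
  rcases lt_or_eq_of_le h with h' | h'
  · obtain ⟨γ, h1, h2, h3, h4⟩ := lift_path h'
    exact dLE_le_of_path γ h1 h2 h3 h4
  · rw [perp_identity h'.symm]
    exact dLE_le_pathZ A B

lemma dLE_easy {A B : ℂ} (h : 0 ≤ ((starRingEnd ℂ) A * B).re) :
    dLE A B = ‖B ^ 2 - A ^ 2‖ :=
  le_antisymm (dLE_le_easy h) (dLE_ge_sub A B)

lemma ext_re {a b c : ℂ} (h : a ^ 2 + c ^ 2 = 2 * b ^ 2) :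
    4 * ((starRingEnd ℂ) a * b).re * ((starRingEnd ℂ) b * c).re
      = ((starRingEnd ℂ) a * c).re
        * (Complex.normSq a + Complex.normSq c + 2 * Complex.normSq b) := by
  have h1 := congrArg Complex.re h
  have h2 := congrArg Complex.im h
  simp only [Complex.add_re, Complex.add_im, Complex.mul_re, Complex.mul_im, pow_two,
    Complex.re_ofNat, Complex.im_ofNat] at h1 h2
  rw [re_conj_mul, re_conj_mul, re_conj_mul]
  simp only [Complex.normSq_apply]
  linear_combination (a.im * c.im - a.re * c.re) * h1 - (a.re * c.im + a.im * c.re) * h2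

/-- Every geodesic segment in the log-euclidean plane can be extended. -/
theorem dLE_geodesic_extension (A B : ℂ) (hAB : A ≠ B) :
    ∃ C : ℂ, C ≠ B ∧ dLE A B + dLE B C = dLE A C := by
  by_cases hB : B = 0
  · subst hB
    refine ⟨-A, by simpa using hAB, ?_⟩
    have h1 : dLE A 0 = ‖(0:ℂ) ^ 2 - A ^ 2‖ := dLE_easy (by simp)
    have h2 : dLE 0 (-A) = ‖(-A) ^ 2 - (0:ℂ) ^ 2‖ := dLE_easy (by simp)
    have h3 : dLE A (-A) = ‖A‖ ^ 2 + ‖-A‖ ^ 2 := dLE_hard (by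
      simp only [re_conj_mul, Complex.neg_re, Complex.neg_im]
      nlinarith [sq_nonneg A.re, sq_nonneg A.im])
    rw [h1, h2, h3]
    have e1 : ‖(0:ℂ) ^ 2 - A ^ 2‖ = ‖A‖ ^ 2 := by
      rw [show (0:ℂ)^2 - A^2 = -(A^2) by ring, norm_neg, norm_pow]
    have e2 : ‖(-A) ^ 2 - (0:ℂ) ^ 2‖ = ‖A‖ ^ 2 := by
      rw [show (-A)^2 - (0:ℂ)^2 = A^2 by ring, norm_pow]
    have e3 : ‖-A‖ = ‖A‖ := norm_neg _
    rw [e1, e2, e3]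
  · by_cases hA : ((starRingEnd ℂ) A * B).re ≤ 0
    · refine ⟨2 * B, ?_, ?_⟩
      · intro hC
        apply hB
        have h21 : (2 - 1 : ℂ) * B = 0 := by rw [sub_mul, hC]; ring
        norm_num at h21
        exact h21
      · have h1 : dLE A B = ‖A‖ ^ 2 + ‖B‖ ^ 2 := dLE_hard hA
        have h2 : dLE B (2 * B) = ‖(2 * B) ^ 2 - B ^ 2‖ := dLE_easy (by
          rw [re_conj_mul]
          simp only [Complex.mul_re, Complex.mul_im, Complex.re_ofNat, Complex.im_ofNat]
          nlinarith [sq_nonneg B.re, sq_nonneg B.im])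
        have h3 : dLE A (2 * B) = ‖A‖ ^ 2 + ‖2 * B‖ ^ 2 := dLE_hard (by
          have : ((starRingEnd ℂ) A * (2 * B)).re = 2 * ((starRingEnd ℂ) A * B).re := by
            simp only [re_conj_mul, Complex.mul_re, Complex.mul_im, Complex.re_ofNat,
              Complex.im_ofNat]
            ring
          rw [this]
          linarith)
        rw [h1, h2, h3]
        have e1 : ‖(2 * B) ^ 2 - B ^ 2‖ = 3 * ‖B‖ ^ 2 := by
          rw [show (2 * B)^2 - B^2 = 3 * B^2 by ring, norm_mul, norm_pow]
          norm_num
        have e2 : ‖2 * B‖ ^ 2 = 4 * ‖B‖ ^ 2 := by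
          rw [norm_mul, Complex.norm_two]
          ring
        rw [e1, e2]
        ring
    · push_neg at hA
      set D : ℂ := 2 * B ^ 2 - A ^ 2 with hD
      have hC0sq : (D ^ ((1:ℂ)/2)) ^ 2 = D := by
        by_cases hD0 : D = 0
        · rw [hD0, Complex.zero_cpow (by norm_num)]
          ring
        · rw [sq, ← Complex.cpow_add _ _ hD0]
          norm_num
      obtain ⟨C, hCsq, hBC⟩ : ∃ C : ℂ, C ^ 2 = D ∧ 0 ≤ ((starRingEnd ℂ) B * C).re := by
        by_cases hs : 0 ≤ ((starRingEnd ℂ) B * (D ^ ((1:ℂ)/2))).re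
        · exact ⟨D ^ ((1:ℂ)/2), hC0sq, hs⟩
        · refine ⟨-(D ^ ((1:ℂ)/2)), by rw [neg_sq]; exact hC0sq, ?_⟩
          rw [mul_neg, Complex.neg_re]
          linarith [not_le.1 hs]
      have hsum : A ^ 2 + C ^ 2 = 2 * B ^ 2 := by rw [hCsq, hD]; ring
      have hAC : 0 ≤ ((starRingEnd ℂ) A * C).re := by
        have hid := ext_re hsum
        have hpos : 0 < Complex.normSq A + Complex.normSq C + 2 * Complex.normSq B := by
          have := Complex.normSq_pos.2 hB
          nlinarith [Complex.normSq_nonneg A, Complex.normSq_nonneg C]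
        nlinarith [mul_nonneg hA.le hBC]
      have hCneB : C ≠ B := by
        intro hCB
        have hA2B2 : A ^ 2 = B ^ 2 := by
          have : B ^ 2 = D := by rw [← hCB, hCsq]
          rw [hD] at this
          linear_combination this
        have hfac : (A - B) * (A + B) = 0 := by linear_combination hA2B2
        rcases mul_eq_zero.1 hfac with h' | h'
        · exact hAB (sub_eq_zero.1 h')
        · have hAeq : A = -B := eq_neg_of_add_eq_zero_left h'
          rw [hAeq] at hA
          simp only [map_neg, neg_mul, Complex.neg_re] at hA
          have : 0 ≤ ((starRingEnd ℂ) B * B).re := by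
            rw [re_conj_mul]
            nlinarith [sq_nonneg B.re, sq_nonneg B.im]
          linarith
      refine ⟨C, hCneB, ?_⟩
      have h1 : dLE A B = ‖B ^ 2 - A ^ 2‖ := dLE_easy hA.le
      have h2 : dLE B C = ‖C ^ 2 - B ^ 2‖ := dLE_easy hBC
      have h3 : dLE A C = ‖C ^ 2 - A ^ 2‖ := dLE_easy hAC
      rw [h1, h2, h3]
      have e1 : C ^ 2 - B ^ 2 = B ^ 2 - A ^ 2 := by rw [hCsq, hD]; ring
      have e2 : C ^ 2 - A ^ 2 = 2 * (B ^ 2 - A ^ 2) := by rw [hCsq, hD]; ring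
      rw [e1, e2, norm_mul, Complex.norm_two]
      ring

end Final
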